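/- Let Π₀ be a 2×2 real positive definite matrix, W > 0, and z₀, …, z_{T−1} ∈ ℝ², and define recursively Π_{t+1} := Φ(Π_t, z_t). Then det(Π_T) = det(Π₀) · Π_{t=0}^{T−1} W/(W + z_tᵀ Π_t z_t); equivalently, the accumulated information utility satisfies L_T := (1/2)·log det(Π₀) − (1/2)·log det(Π_T) = Σ_{t=0}^{T−1} (1/2)·log(1 + (z_tᵀ Π_t z_t)/W). -/

import Mathlib

open Matrix

/-! Write `q = zᵀΠz`. Since `Π - c • Π z zᵀ Π = Π (1 - c • z zᵀ Π)`, the matrix determinant lemma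
gives `det Φ(Π, z) = det Π · (1 - q / (W + q)) = det Π · W / (W + q)`. Positive definiteness
propagates along the recursion: by Cauchy–Schwarz for the form of `Π`, `(xᵀΠz)² ≤ (xᵀΠx) q`, hence
`xᵀ Φ(Π, z) x ≥ W · xᵀΠx / (W + q)`. So every `W + q_t` is positive, the product formula follows
by induction, and the utility identity by taking logarithms. -/

/-- The LSE covariance update map Φ(Π, z) = Π − (Π z zᵀ Π)/(W + zᵀ Π z). -/
noncomputable def covUpdate (W : ℝ) (Pm : Matrix (Fin 2) (Fin 2) ℝ) (z : Fin 2 → ℝ) :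
    Matrix (Fin 2) (Fin 2) ℝ :=
  Pm - (W + z ⬝ᵥ Pm.mulVec z)⁻¹ • (Pm * vecMulVec z z * Pm)

namespace Matrix

variable {n : Type*} [Fintype n]

theorem det_sub_smul_mul_vecMulVec_mul {R : Type*} [CommRing R] [DecidableEq n]
    (P : Matrix n n R) (z : n → R) (c : R) :
    (P - c • (P * vecMulVec z z * P)).det = P.det * (1 - c * (z ⬝ᵥ P *ᵥ z)) := by
  have h : P - c • (P * vecMulVec z z * P)
      = P * (1 + replicateCol Unit (-c • z) * replicateRow Unit (z ᵥ* P)) := by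
    rw [← vecMulVec_eq, Matrix.mul_assoc, vecMulVec_mul, Matrix.mul_add, Matrix.mul_one,
      neg_smul, neg_vecMulVec, smul_vecMulVec, Matrix.mul_neg, Matrix.mul_smul, sub_eq_add_neg]
  rw [h, det_mul, det_one_add_replicateCol_mul_replicateRow, dotProduct_smul,
    ← dotProduct_mulVec, smul_eq_mul, neg_mul, ← sub_eq_add_neg]

theorem PosSemidef.dotProduct_mulVec_sq_le {P : Matrix n n ℝ} (hP : P.PosSemidef)
    (x y : n → ℝ) : (x ⬝ᵥ P *ᵥ y) ^ 2 ≤ (x ⬝ᵥ P *ᵥ x) * (y ⬝ᵥ P *ᵥ y) := by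
  let _ := P.toSeminormedAddCommGroup hP
  let _ := P.toInnerProductSpace hP
  have hinner : ∀ u v : n → ℝ, inner ℝ u v = u ⬝ᵥ P *ᵥ v := fun u v => dotProduct_comm _ _
  have hcs := real_inner_mul_inner_self_le x y
  rwa [hinner, hinner, hinner, ← sq] at hcs

theorem IsSymm.dotProduct_mul_vecMulVec_mul_mulVec {P : Matrix n n ℝ} (hP : P.IsSymm)
    (x z : n → ℝ) : x ⬝ᵥ (P * vecMulVec z z * P) *ᵥ x = (x ⬝ᵥ P *ᵥ z) ^ 2 := by
  rw [mul_vecMulVec, vecMulVec_mul, vecMulVec_mulVec, dotProduct_smul, ← mulVec_transpose, hP.eq]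
  simp [dotProduct_comm, sq]

theorem PosDef.sub_smul_mul_vecMulVec_mul {P : Matrix n n ℝ} (hP : P.PosDef) {W : ℝ}
    (hW : 0 < W) (z : n → ℝ) :
    (P - (W + z ⬝ᵥ P *ᵥ z)⁻¹ • (P * vecMulVec z z * P)).PosDef := by
  have hsymm : P.IsSymm := by simpa using hP.isHermitian
  have hq : 0 ≤ z ⬝ᵥ P *ᵥ z := by simpa using hP.posSemidef.dotProduct_mulVec_nonneg z
  refine .of_dotProduct_mulVec_pos ?_ fun x hx => ?_
  · refine hP.isHermitian.sub (.smul ?_ (.all _))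
    have h := isHermitian_conjTranspose_mul_mul P (A := vecMulVec z z) (by simp [IsHermitian])
    rwa [hP.isHermitian.eq] at h
  · have ha : 0 < x ⬝ᵥ P *ᵥ x := by simpa using hP.dotProduct_mulVec_pos hx
    have hcs := hP.posSemidef.dotProduct_mulVec_sq_le x z
    rw [star_trivial, sub_mulVec, dotProduct_sub, smul_mulVec, dotProduct_smul, smul_eq_mul,
      hsymm.dotProduct_mul_vecMulVec_mul_mulVec, sub_pos, inv_mul_lt_iff₀ (by linarith)]
    nlinarith

end Matrix

theorem det_covUpdate {W : ℝ} (Pm : Matrix (Fin 2) (Fin 2) ℝ) (z : Fin 2 → ℝ)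
    (hgain : W + z ⬝ᵥ Pm *ᵥ z ≠ 0) :
    (covUpdate W Pm z).det = Pm.det * (W / (W + z ⬝ᵥ Pm *ᵥ z)) := by
  rw [covUpdate, det_sub_smul_mul_vecMulVec_mul]
  field_simp
  ring

theorem posDef_covUpdate {W : ℝ} {Pm : Matrix (Fin 2) (Fin 2) ℝ} (hPm : Pm.PosDef) (hW : 0 < W)
    (z : Fin 2 → ℝ) : (covUpdate W Pm z).PosDef :=
  hPm.sub_smul_mul_vecMulVec_mul hW z

theorem Real.log_div_add_eq_neg_log_one_add_div {a : ℝ} (b : ℝ) (ha : a ≠ 0) :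
    Real.log (a / (a + b)) = -Real.log (1 + b / a) := by
  rw [← Real.log_inv, one_add_div ha, inv_div]

/-- det Π_T = det Π₀ · ∏_{t<T} W/(W + z_tᵀ Π_t z_t); equivalently the accumulated
information utility L_T = (1/2)·log det Π₀ − (1/2)·log det Π_T equals
Σ_{t<T} (1/2)·log(1 + z_tᵀ Π_t z_t / W). -/
theorem covUpdate_accumulated_utility
    (Pm0 : Matrix (Fin 2) (Fin 2) ℝ) (hPm0 : Pm0.PosDef)
    (W : ℝ) (hW : 0 < W) (T : ℕ) (z : ℕ → Fin 2 → ℝ)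
    (Pi : ℕ → Matrix (Fin 2) (Fin 2) ℝ)
    (hPi0 : Pi 0 = Pm0)
    (hrec : ∀ t, Pi (t + 1) = covUpdate W (Pi t) (z t)) :
    (Pi T).det = Pm0.det * ∏ t ∈ Finset.range T, W / (W + z t ⬝ᵥ (Pi t).mulVec (z t)) ∧
      (1 / 2) * Real.log Pm0.det - (1 / 2) * Real.log (Pi T).det
        = ∑ t ∈ Finset.range T, (1 / 2) * Real.log (1 + (z t ⬝ᵥ (Pi t).mulVec (z t)) / W) := by
  have hPD : ∀ t, (Pi t).PosDef := by
    intro t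
    induction t with
    | zero => rwa [hPi0]
    | succ t ih => rw [hrec]; exact posDef_covUpdate ih hW (z t)
  have hgain : ∀ t, 0 < W + z t ⬝ᵥ (Pi t) *ᵥ z t := fun t =>
    add_pos_of_pos_of_nonneg hW (by simpa using (hPD t).posSemidef.dotProduct_mulVec_nonneg (z t))
  have hdet : ∀ T,
      (Pi T).det = Pm0.det * ∏ t ∈ Finset.range T, W / (W + z t ⬝ᵥ (Pi t) *ᵥ z t) := by
    intro T
    induction T with
    | zero => simp [hPi0]
    | succ T ih => rw [hrec, det_covUpdate _ _ (hgain T).ne', ih, Finset.prod_range_succ, mul_assoc]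
  refine ⟨hdet T, ?_⟩
  have hfactor : ∀ t ∈ Finset.range T, W / (W + z t ⬝ᵥ (Pi t) *ᵥ z t) ≠ 0 :=
    fun t _ => (div_pos hW (hgain t)).ne'
  rw [hdet T, Real.log_mul hPm0.det_pos.ne' (Finset.prod_ne_zero_iff.2 hfactor),
    Real.log_prod hfactor, ← Finset.mul_sum]
  simp only [Real.log_div_add_eq_neg_log_one_add_div _ hW.ne', Finset.sum_neg_distrib]
  ring
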